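/- The monomial subalgebra A = K[q^{a²}x^a : a ∈ ℕ] of the polynomial ring K[q,x] over a field K is not Noetherian; in particular, A is not finitely generated as a K-algebra. -/

import Mathlib

/-!
Every monomial `q^m x^n` occurring in an element of `A` satisfies `m ≤ n²`, since
`(a + b)² ≥ a² + b²`. For `0 < a < m`, a factorisation `q^{m²} x^m = q^{t₀} x^{t₁} · q^{a²} x^a`
with `t₀ ≤ t₁²` would give `m² = t₀ + a² ≤ t₁² + a² < (t₁ + a)² = m²`. Hence `q^{m²} x^m` is not in
the ideal of `A` generated by the `q^{a²} x^a` with `0 < a < m`, these ideals form a strictly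
increasing chain, and `A` is not Noetherian. By the Hilbert basis theorem it is not finitely
generated either.
-/

open MvPolynomial

/-- The monomial subalgebra `K[q^{a²} x^a : a ∈ ℕ]` of `K[q,x]`,
where `q = X 0` and `x = X 1`. -/
noncomputable def weightedSubalgebra (K : Type*) [Field K] :
    Subalgebra K (MvPolynomial (Fin 2) K) :=
  Algebra.adjoin K { p | ∃ a : ℕ, p = X 0 ^ (a ^ 2) * X 1 ^ a }

namespace MvPolynomial

variable {σ R : Type*} [CommSemiring R] {S : AddSubmonoid (σ →₀ ℕ)}

noncomputable def restrictSupportSubalgebra (S : AddSubmonoid (σ →₀ ℕ)) :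
    Subalgebra R (MvPolynomial σ R) :=
  (restrictSupport R (S : Set (σ →₀ ℕ))).toSubalgebra
    ((monomial_mem_restrictSupport R).2 (Or.inl S.zero_mem))
    fun p q hp hq => by
      classical
      rw [mem_restrictSupport_iff] at hp hq ⊢
      exact (Finset.coe_subset.2 (support_mul p q)).trans <| by
        simpa only [Finset.coe_add] using AddSubmonoid.add_subset hp hq

theorem mem_restrictSupportSubalgebra_iff {p : MvPolynomial σ R} :
    p ∈ restrictSupportSubalgebra (R := R) S ↔ ↑p.support ⊆ (S : Set (σ →₀ ℕ)) :=
  Iff.rfl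

theorem monomial_mem_restrictSupportSubalgebra {s : σ →₀ ℕ} (hs : s ∈ S) (r : R) :
    monomial s r ∈ restrictSupportSubalgebra S :=
  (monomial_mem_restrictSupport R).2 (Or.inl hs)

theorem coeff_mul_monomial_eq_zero_of_mem_restrictSupportSubalgebra
    {p : MvPolynomial σ R} (hp : p ∈ restrictSupportSubalgebra S)
    {s d : σ →₀ ℕ} (hd : ∀ t ∈ S, t + s ≠ d) (r : R) :
    coeff d (p * monomial s r) = 0 := by
  rw [coeff_mul_monomial']
  split_ifs with hsd
  · rw [notMem_support_iff.1 fun h =>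
      hd _ (mem_restrictSupportSubalgebra_iff.1 hp h) (tsub_add_cancel_of_le hsd), zero_mul]
  · rfl

theorem X_pow_mul_X_pow_eq_monomial (i j : σ) (m n : ℕ) :
    (X i ^ m * X j ^ n : MvPolynomial σ R) =
      monomial (Finsupp.single i m + Finsupp.single j n) 1 := by
  rw [monomial_single_add, ← X_pow_eq_monomial]

end MvPolynomial

def belowParabola : AddSubmonoid (Fin 2 →₀ ℕ) where
  carrier := {d | d 0 ≤ d 1 ^ 2}
  zero_mem' := by simp
  add_mem' {d e} hd he := by
    change d 0 ≤ d 1 ^ 2 at hd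
    change e 0 ≤ e 1 ^ 2 at he
    change d 0 + e 0 ≤ (d 1 + e 1) ^ 2
    nlinarith [Nat.zero_le (d 1 * e 1)]

noncomputable def parabolaPoint (a : ℕ) : Fin 2 →₀ ℕ :=
  Finsupp.single 0 (a ^ 2) + Finsupp.single 1 a

theorem parabolaPoint_mem_belowParabola (a : ℕ) : parabolaPoint a ∈ belowParabola := by
  change (parabolaPoint a) 0 ≤ (parabolaPoint a) 1 ^ 2
  simp [parabolaPoint]

theorem add_parabolaPoint_ne_parabolaPoint {t : Fin 2 →₀ ℕ} (ht : t ∈ belowParabola)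
    {a m : ℕ} (ha : 0 < a) (ham : a < m) : t + parabolaPoint a ≠ parabolaPoint m := by
  intro h
  have h0 := DFunLike.congr_fun h 0
  have h1 := DFunLike.congr_fun h 1
  simp [parabolaPoint] at h0 h1
  change t 0 ≤ t 1 ^ 2 at ht
  subst h1
  nlinarith

section

variable (K : Type*) [Field K]

theorem weightedSubalgebra_le_restrictSupportSubalgebra :
    weightedSubalgebra K ≤ restrictSupportSubalgebra belowParabola := by
  refine Algebra.adjoin_le ?_
  rintro _ ⟨a, rfl⟩
  rw [X_pow_mul_X_pow_eq_monomial]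
  exact monomial_mem_restrictSupportSubalgebra (parabolaPoint_mem_belowParabola a) 1

noncomputable def weightedGenerator (a : ℕ) : weightedSubalgebra K :=
  ⟨X 0 ^ (a ^ 2) * X 1 ^ a, Algebra.subset_adjoin ⟨a, rfl⟩⟩

theorem coe_weightedGenerator (a : ℕ) :
    (weightedGenerator K a : MvPolynomial (Fin 2) K) = monomial (parabolaPoint a) 1 :=
  X_pow_mul_X_pow_eq_monomial 0 1 (a ^ 2) a

theorem weightedGenerator_notMem_span (m : ℕ) :
    weightedGenerator K m ∉ Ideal.span (weightedGenerator K '' Set.Ioo 0 m) := by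
  intro h
  obtain ⟨t, ht, c, hc⟩ := (Submodule.mem_span_image_iff_exists_fun _).1 h
  have hcoeff := congrArg (fun f : weightedSubalgebra K => coeff (parabolaPoint m) f.val) hc
  simp only [coe_weightedGenerator, AddSubmonoidClass.coe_finsetSum, coeff_sum, smul_eq_mul,
    Subalgebra.coe_mul] at hcoeff
  rw [coeff_monomial, if_pos rfl, Finset.sum_eq_zero] at hcoeff
  · exact zero_ne_one hcoeff
  · intro a _
    have ha := ht a.2
    exact coeff_mul_monomial_eq_zero_of_mem_restrictSupportSubalgebra
      (weightedSubalgebra_le_restrictSupportSubalgebra K (c a).2)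
      (fun t ht => add_parabolaPoint_ne_parabolaPoint ht ha.1 ha.2) 1

theorem not_isNoetherianRing_weightedSubalgebra : ¬ IsNoetherianRing (weightedSubalgebra K) := by
  intro h
  let I : ℕ →o Ideal (weightedSubalgebra K) :=
    ⟨fun n => Ideal.span (weightedGenerator K '' Set.Ioo 0 n),
      fun _ _ hmn => Ideal.span_mono (Set.image_mono (Set.Ioo_subset_Ioo_right hmn))⟩
  obtain ⟨n, hn⟩ := monotone_stabilizes_iff_noetherian.2 h I
  have hmem : weightedGenerator K (n + 1) ∈ I (n + 2) :=
    Ideal.subset_span ⟨n + 1, ⟨n.succ_pos, by omega⟩, rfl⟩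
  rw [← hn (n + 2) (by omega), hn (n + 1) (by omega)] at hmem
  exact weightedGenerator_notMem_span K (n + 1) hmem

end

theorem stmt_4 (K : Type*) [Field K] :
    ¬ IsNoetherianRing (weightedSubalgebra K) ∧ ¬ (weightedSubalgebra K).FG := by
  refine ⟨not_isNoetherianRing_weightedSubalgebra K, fun hfg => ?_⟩
  rw [Subalgebra.fg_iff_finiteType] at hfg
  exact not_isNoetherianRing_weightedSubalgebra K (Algebra.FiniteType.isNoetherianRing K _)
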